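/- Let X be a locally compact Hausdorff space, let E and F be real Banach spaces, let S : C₀(X,E) → F be a bounded linear operator, and let x ∈ X. Suppose that S(f) = 0 for every f ∈ C₀(X,E) with f(x) = 0. Then there exists a bounded linear operator h : E → F with ‖h‖ ≤ ‖S‖ such that S(f) = h(f(x)) for all f ∈ C₀(X,E). -/

import Mathlib

/-!
Choose a bump function `g ∈ C₀(X, ℝ)` with `g x = 1` and `0 ≤ g ≤ 1` (Urysohn). The map
`e ↦ g • e` is a right inverse of `δ_x` of norm at most one, and `f - g • f x` lies in
`ker δ_x ⊆ ker S`, so `h := S ∘ (e ↦ g • e)` works.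
-/

open ZeroAtInfty

namespace ZeroAtInftyContinuousMap

section Norm

variable {X E : Type*} [TopologicalSpace X] [SeminormedAddCommGroup E]

lemma norm_coe_le_norm (f : C₀(X, E)) (t : X) : ‖f t‖ ≤ ‖f‖ := by
  rw [← norm_toBCF_eq_norm]
  exact f.toBCF.norm_coe_le_norm t

lemma norm_le {f : C₀(X, E)} {C : ℝ} (hC : 0 ≤ C) : ‖f‖ ≤ C ↔ ∀ t, ‖f t‖ ≤ C := by
  rw [← norm_toBCF_eq_norm]
  exact BoundedContinuousFunction.norm_le hC

end Norm

section SmulRight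

variable {X 𝕜 E : Type*} [TopologicalSpace X] [NontriviallyNormedField 𝕜]
  [NormedAddCommGroup E] [NormedSpace 𝕜 E]

def smulRightAux (g : C₀(X, 𝕜)) (e : E) : C₀(X, E) :=
  ⟨⟨fun t => g t • e, (map_continuous g).smul continuous_const⟩,
    by simpa using (zero_at_infty g).smul_const e⟩

@[simp]
lemma smulRightAux_apply (g : C₀(X, 𝕜)) (e : E) (t : X) : smulRightAux g e t = g t • e := rfl

lemma norm_smulRightAux_le (g : C₀(X, 𝕜)) (e : E) : ‖smulRightAux g e‖ ≤ ‖g‖ * ‖e‖ :=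
  (norm_le (by positivity)).2 fun t => by
    rw [smulRightAux_apply, norm_smul]
    gcongr
    exact norm_coe_le_norm g t

noncomputable def smulRight (g : C₀(X, 𝕜)) : E →L[𝕜] C₀(X, E) :=
  LinearMap.mkContinuous
    { toFun := smulRightAux g
      map_add' := fun e e' => by ext t; simp [smul_add]
      map_smul' := fun c e => by ext t; simp [smul_comm (g t) c e] }
    ‖g‖ (norm_smulRightAux_le g)

@[simp]
lemma smulRight_apply_apply (g : C₀(X, 𝕜)) (e : E) (t : X) : smulRight g e t = g t • e := rfl

lemma norm_smulRight_le (g : C₀(X, 𝕜)) : ‖(smulRight g : E →L[𝕜] C₀(X, E))‖ ≤ ‖g‖ :=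
  LinearMap.mkContinuous_norm_le _ (norm_nonneg g) _

end SmulRight

lemma exists_apply_eq_one_norm_le_one {X : Type*} [TopologicalSpace X] [RegularSpace X]
    [LocallyCompactSpace X] (x : X) : ∃ g : C₀(X, ℝ), g x = 1 ∧ ‖g‖ ≤ 1 := by
  obtain ⟨g, hgx, -, hg_supp, hg_mem⟩ :=
    exists_continuous_one_zero_of_isCompact (isCompact_singleton (x := x)) isClosed_empty
      (Set.disjoint_empty _)
  refine ⟨⟨g, hg_supp.is_zero_at_infty⟩, hgx rfl, (norm_le zero_le_one).2 ?_⟩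
  intro t
  change |g t| ≤ 1
  rw [abs_le]
  exact ⟨by linarith [(hg_mem t).1], (hg_mem t).2⟩

lemma map_eq_map_smulRight_apply {X 𝕜 E F G : Type*} [TopologicalSpace X]
    [NontriviallyNormedField 𝕜] [NormedAddCommGroup E] [NormedSpace 𝕜 E] [AddCommGroup F]
    [FunLike G C₀(X, E) F] [AddMonoidHomClass G C₀(X, E) F] {S : G} {x : X}
    (hker : ∀ f : C₀(X, E), f x = 0 → S f = 0) {g : C₀(X, 𝕜)} (hgx : g x = 1)
    (f : C₀(X, E)) : S f = S (smulRight g (f x)) := by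
  rw [← sub_eq_zero, ← map_sub]
  exact hker _ (by simp [hgx])

end ZeroAtInftyContinuousMap

open ZeroAtInftyContinuousMap in
theorem factor_through_evaluation_general {X E F : Type*}
    [TopologicalSpace X] [LocallyCompactSpace X] [T2Space X]
    [NormedAddCommGroup E] [NormedSpace ℝ E]
    [NormedAddCommGroup F] [NormedSpace ℝ F]
    (S : C₀(X, E) →L[ℝ] F) (x : X)
    (hker : ∀ f : C₀(X, E), f x = 0 → S f = 0) :
    ∃ h : E →L[ℝ] F, ‖h‖ ≤ ‖S‖ ∧ ∀ f : C₀(X, E), S f = h (f x) := by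
  obtain ⟨g, hgx, hg⟩ := exists_apply_eq_one_norm_le_one x
  refine ⟨S.comp (smulRight g), ?_, map_eq_map_smulRight_apply hker hgx⟩
  calc ‖S.comp (smulRight g)‖ ≤ ‖S‖ * ‖(smulRight g : E →L[ℝ] C₀(X, E))‖ := S.opNorm_comp_le _
    _ ≤ ‖S‖ * 1 := by gcongr; exact (norm_smulRight_le g).trans hg
    _ = ‖S‖ := mul_one _

/-- Factorization through evaluation: if a bounded linear operator `S : C₀(X, E) → F`
vanishes on every `f` with `f x = 0`, then `S = h ∘ δ_x` for some bounded linear operator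
`h : E → F` with `‖h‖ ≤ ‖S‖`. -/
theorem factor_through_evaluation {X E F : Type*}
    [TopologicalSpace X] [LocallyCompactSpace X] [T2Space X]
    [NormedAddCommGroup E] [NormedSpace ℝ E] [CompleteSpace E]
    [NormedAddCommGroup F] [NormedSpace ℝ F] [CompleteSpace F]
    (S : C₀(X, E) →L[ℝ] F) (x : X)
    (hker : ∀ f : C₀(X, E), f x = 0 → S f = 0) :
    ∃ h : E →L[ℝ] F, ‖h‖ ≤ ‖S‖ ∧ ∀ f : C₀(X, E), S f = h (f x) :=
  factor_through_evaluation_general S x hker
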